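/- arXiv:2211.09556 — 2 statements merged into one kernel-verified Lean document; each statement's English description precedes it below -/
import Mathlib

section
/- Let E ⊆ F ∩ L be subfields of ℂ. If F is linearly disjoint from L over E and E = F ∩ L, then F is G(E)-disjoint from L: for any ℓ₁, ℓ₂ ∈ L, if there exists g ∈ GL₂(F) with gℓ₁ = ℓ₂ (acting by Möbius transformations), then there exists h ∈ GL₂(E) with hℓ₁ = ℓ₂. -/
/-- `v` is linearly independent over the set of scalars `E` (as coefficients in `ℂ`). -/
def LinIndepOver (E : Set ℂ) {n : ℕ} (v : Fin n → ℂ) : Prop :=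
  ∀ c : Fin n → ℂ, (∀ i, c i ∈ E) → ∑ i, c i * v i = 0 → ∀ i, c i = 0

/-- `F` is linearly disjoint from `L` over `E`: every finite tuple from `L` that is
`E`-linearly independent is `F`-linearly independent. -/
def LinDisjoint (E : Subfield ℂ) (F L : Set ℂ) : Prop :=
  ∀ (n : ℕ) (v : Fin n → ℂ), (∀ i, v i ∈ L) → LinIndepOver (E : Set ℂ) v → LinIndepOver F v

/-- `x` and `y` are related by a Möbius transformation with coefficients in `K`. -/
def MobiusRel (K : Set ℂ) (x y : ℂ) : Prop :=
  ∃ a b c d : ℂ, a ∈ K ∧ b ∈ K ∧ c ∈ K ∧ d ∈ K ∧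
    a * d - b * c ≠ 0 ∧ c * x + d ≠ 0 ∧ (a * x + b) / (c * x + d) = y

/-!
A Möbius relation `y = (a x + b) / (c x + d)` is the same thing as a linear relation
`a x + b - d y - c x y = 0` between `x, 1, y, x y` with coefficients not all zero. If `x ∈ L` is
Möbius-related to `y ∈ L` over `F`, the tuple `(x, 1, y, x y)` from `L` is `F`-dependent, hence
`E`-dependent by linear disjointness, and an `E`-relation is read back as a Möbius relation over
`E`, unless it degenerates; it can only degenerate when `x` or `y` lies in `E`, and then both do
since `F ∩ L = E`, so a translation relates them.
-/

section Mobius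

variable {K : Subfield ℂ} {x y : ℂ}

lemma eq_zero_of_mul_add_eq_zero (hx : x ∉ K) {a b : ℂ} (ha : a ∈ K) (hb : b ∈ K)
    (h : a * x + b = 0) : a = 0 ∧ b = 0 := by
  have ha0 : a = 0 := by
    by_contra ha0
    have : x = -b / a := by rw [eq_div_iff ha0]; linear_combination h
    exact hx (this ▸ div_mem (neg_mem hb) ha)
  exact ⟨ha0, by simpa [ha0] using h⟩

lemma MobiusRel.mem_of_mem (h : MobiusRel K x y) (hx : x ∈ K) : y ∈ K := by
  obtain ⟨a, b, c, d, ha, hb, hc, hd, -, -, rfl⟩ := h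
  exact div_mem (add_mem (mul_mem ha hx) hb) (add_mem (mul_mem hc hx) hd)

lemma MobiusRel.symm (h : MobiusRel K x y) : MobiusRel K y x := by
  obtain ⟨a, b, c, d, ha, hb, hc, hd, hdet, hden, hxy⟩ := h
  have hrel : y * (c * x + d) = a * x + b := (eq_div_iff hden).mp hxy.symm
  have hden' : -c * y + a ≠ 0 := by
    intro h0
    exact hdet (by linear_combination (c * x + d) * h0 + c * hrel)
  refine ⟨d, -b, -c, a, hd, neg_mem hb, neg_mem hc, ha,
    by contrapose! hdet; linear_combination hdet, hden', ?_⟩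
  rw [div_eq_iff hden']
  linear_combination hrel

lemma mobiusRel_of_mem (hx : x ∈ K) (hy : y ∈ K) : MobiusRel K x y :=
  ⟨1, y - x, 0, 1, one_mem K, sub_mem hy hx, zero_mem K, one_mem K, by norm_num, by norm_num,
    by ring⟩

lemma MobiusRel.not_linIndepOver (h : MobiusRel K x y) :
    ¬ LinIndepOver (K : Set ℂ) ![x, 1, y, x * y] := by
  obtain ⟨a, b, c, d, ha, hb, hc, hd, hdet, hden, hxy⟩ := h
  intro hind
  have hrel : a * x + b = y * (c * x + d) := (div_eq_iff hden).mp hxy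
  have hsum : ∑ i, ![a, b, -d, -c] i * ![x, 1, y, x * y] i = 0 := by
    simp only [Fin.sum_univ_four, Matrix.cons_val_zero, Matrix.cons_val_one, Matrix.cons_val]
    linear_combination hrel
  have hzero := hind ![a, b, -d, -c]
    (by intro i; fin_cases i; exacts [ha, hb, neg_mem hd, neg_mem hc]) hsum
  have hc0 : c = 0 := neg_eq_zero.mp (hzero 3)
  have hd0 : d = 0 := neg_eq_zero.mp (hzero 2)
  exact hdet (by simp [hc0, hd0])

lemma mobiusRel_of_not_linIndepOver (hx : x ∉ K) (hy : y ∉ K)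
    (h : ¬ LinIndepOver (K : Set ℂ) ![x, 1, y, x * y]) : MobiusRel K x y := by
  simp only [LinIndepOver, not_forall] at h
  obtain ⟨w, hwK, hsum, i, hwi⟩ := h
  simp only [SetLike.mem_coe] at hwK
  have hrel : y * (w 3 * x + w 2) + (w 0 * x + w 1) = 0 := by
    simp only [Fin.sum_univ_four, Matrix.cons_val_zero, Matrix.cons_val_one, Matrix.cons_val]
      at hsum
    linear_combination hsum
  have hw_zero_of_den : w 3 * x + w 2 = 0 → ∀ j, w j = 0 := by
    intro hden
    obtain ⟨h3, h2⟩ := eq_zero_of_mul_add_eq_zero hx (hwK 3) (hwK 2) hden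
    obtain ⟨h0, h1⟩ :=
      eq_zero_of_mul_add_eq_zero hx (hwK 0) (hwK 1) (by simpa [hden] using hrel)
    intro j; fin_cases j <;> assumption
  have hden : w 3 * x + w 2 ≠ 0 := fun hden => hwi (hw_zero_of_den hden i)
  refine ⟨-w 0, -w 1, w 3, w 2, neg_mem (hwK 0), neg_mem (hwK 1), hwK 3, hwK 2, ?_, hden, ?_⟩
  · intro hdet
    -- a singular Möbius map is constant, and its value `y` would then lie in `K`
    have h3 : w 3 * y + w 0 = 0 := mul_right_cancel₀ hden
      (by linear_combination w 3 * hrel - hdet)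
    have h2 : w 2 * y + w 1 = 0 := mul_right_cancel₀ hden
      (by linear_combination w 2 * hrel + x * hdet)
    exact hden (by
      rw [(eq_zero_of_mul_add_eq_zero hy (hwK 3) (hwK 0) h3).1,
        (eq_zero_of_mul_add_eq_zero hy (hwK 2) (hwK 1) h2).1]
      ring)
  · rw [div_eq_iff hden]
    linear_combination -hrel

end Mobius

theorem stmt_0_general (E F L : Subfield ℂ)
    (hld : LinDisjoint E (F : Set ℂ) (L : Set ℂ)) (hcap : F ⊓ L = E) :
    ∀ ℓ₁ ℓ₂ : ℂ, ℓ₁ ∈ L → ℓ₂ ∈ L →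
      MobiusRel (F : Set ℂ) ℓ₁ ℓ₂ → MobiusRel (E : Set ℂ) ℓ₁ ℓ₂ := by
  intro ℓ₁ ℓ₂ hℓ₁ hℓ₂ hF
  have mem_E_of_mem_E : ∀ {x y : ℂ}, y ∈ L → MobiusRel F x y → x ∈ E → y ∈ E := by
    intro x y hy h hx
    rw [← hcap] at hx ⊢
    exact ⟨h.mem_of_mem hx.1, hy⟩
  by_cases h₁ : ℓ₁ ∈ E
  · exact mobiusRel_of_mem h₁ (mem_E_of_mem_E hℓ₂ hF h₁)
  · have h₂ : ℓ₂ ∉ E := fun h₂ => h₁ (mem_E_of_mem_E hℓ₁ hF.symm h₂)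
    have hmem : ∀ i, ![ℓ₁, 1, ℓ₂, ℓ₁ * ℓ₂] i ∈ (L : Set ℂ) := by
      intro i; fin_cases i <;> simp [hℓ₁, hℓ₂, mul_mem]
    exact mobiusRel_of_not_linIndepOver h₁ h₂ fun hE => hF.not_linIndepOver (hld 4 _ hmem hE)

theorem stmt_0 (E F L : Subfield ℂ) (hE : E ≤ F ⊓ L)
    (hld : LinDisjoint E (F : Set ℂ) (L : Set ℂ)) (hcap : F ⊓ L = E) :
    ∀ ℓ₁ ℓ₂ : ℂ, ℓ₁ ∈ L → ℓ₂ ∈ L →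
      MobiusRel (F : Set ℂ) ℓ₁ ℓ₂ → MobiusRel (E : Set ℂ) ℓ₁ ℓ₂ :=
  stmt_0_general E F L hld hcap
end

section
/- Assume Schanuel's Conjecture. Let t ∈ ℂᵐ be a tuple with tr.deg_ℚ ℚ(t, exp(t)) = l.dim_ℚ(t) (taking dim^e(t) = 0 for simplicity), and set F = ℚ(t, exp(t)). Then for any x ∈ ℂⁿ: tr.deg_F F(x, exp(x)) ≥ l.dim_ℚ(x | t), where l.dim_ℚ(x | t) is the dimension of the span of x₁,...,xₙ in the quotient ℂ-vector space ℂ / Span_ℚ(t). -/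
/-!
Apply Schanuel's conjecture to the joint tuple `(t, x)`. Its linear dimension is
`l.dim(t) + l.dim(x | t)`, while transcendence degree is additive in the tower
`ℚ ⊆ F = ℚ(t, e^t) ⊆ F(x, e^x)`, so
`tr.deg ℚ(t, x, e^t, e^x) = tr.deg ℚ(t, e^t) + tr.deg_F F(x, e^x)`.
The hypothesis turns the first summand into `l.dim(t)`, which is finite and can be cancelled.
-/

/-- The transcendence degree over `ℚ` of the field `ℚ(S)`. -/
noncomputable def trdegQ (S : Set ℂ) : Cardinal :=
  ⨆ t : {t : Set ℂ // t ⊆ (IntermediateField.adjoin ℚ S : Set ℂ) ∧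
      AlgebraicIndependent ℚ ((↑) : t → ℂ)}, Cardinal.mk t.1

/-- The transcendence degree over the subfield `E` of the field `E(S)`. -/
noncomputable def trdegOver (E : Subfield ℂ) (S : Set ℂ) : Cardinal :=
  ⨆ t : {t : Set ℂ // t ⊆ (IntermediateField.adjoin (↥E) S : Set ℂ) ∧
      AlgebraicIndependent (↥E) ((↑) : t → ℂ)}, Cardinal.mk t.1

open Cardinal

universe u

theorem iSup_mk_algebraicIndependent_subset_range_eq_trdeg {K : Type*} {A L : Type u}
    [CommRing K] [Nontrivial K] [CommRing A] [CommRing L] [Algebra K A] [Algebra K L]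
    (f : A →ₐ[K] L) (hf : Function.Injective f) :
    ⨆ t : {t : Set L // t ⊆ Set.range f ∧ AlgebraicIndependent K ((↑) : t → L)}, #t.1 =
      Algebra.trdeg K A := by
  apply le_antisymm
  · refine ciSup_le' fun ⟨t, htf, ht⟩ => ?_
    choose x hx using fun i : t => htf i.2
    have hxt : f ∘ x = (↑) := funext hx
    exact (AlgebraicIndependent.of_comp f (hxt ▸ ht)).cardinalMk_le_trdeg
  · exact ciSup_le' fun ⟨s, hs⟩ => le_ciSup_of_le bddAbove_of_small
      ⟨f '' s, Set.image_subset_range f s, (hs.map' hf).image⟩ (mk_image_eq hf).ge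

theorem Subfield.closure_union_range_algebraMap_rat {L : Type*} [Field L] [CharZero L]
    (S : Set L) :
    Subfield.closure (Set.range (algebraMap ℚ L) ∪ S) = Subfield.closure S := by
  rw [Subfield.closure_union, sup_eq_right, Subfield.closure_le]
  rintro _ ⟨q, rfl⟩
  exact SubfieldClass.ratCast_mem _ q

theorem trdegQ_eq_trdeg_closure (S : Set ℂ) :
    trdegQ S = Algebra.trdeg ℚ (Subfield.closure S) := by
  have hS : (IntermediateField.adjoin ℚ S : Set ℂ) =
      Set.range (Subfield.closure S).subtype.toRatAlgHom := by
    rw [← IntermediateField.coe_toSubfield, IntermediateField.adjoin_toSubfield,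
      Subfield.closure_union_range_algebraMap_rat]
    exact Subtype.range_val.symm
  rw [trdegQ, hS, iSup_mk_algebraicIndependent_subset_range_eq_trdeg _ Subtype.val_injective]

theorem trdegOver_eq_trdeg_adjoin (E : Subfield ℂ) (S : Set ℂ) :
    trdegOver E S = Algebra.trdeg E (IntermediateField.adjoin E S) := by
  rw [trdegOver, ← Subtype.range_val (s := (IntermediateField.adjoin E S : Set ℂ))]
  exact iSup_mk_algebraicIndependent_subset_range_eq_trdeg (IntermediateField.adjoin E S).val
    Subtype.val_injective

theorem trdegQ_union (S T : Set ℂ) :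
    trdegQ (S ∪ T) = trdegQ S + trdegOver (Subfield.closure S) T := by
  set F := Subfield.closure S
  have : FaithfulSMul F (IntermediateField.adjoin F T) :=
    (faithfulSMul_iff_algebraMap_injective _ _).2 (algebraMap F _).injective
  have hST : (IntermediateField.adjoin ℚ (S ∪ T) : Set ℂ) =
      Set.range (IntermediateField.adjoin F T).val.toRingHom.toRatAlgHom := by
    rw [← IntermediateField.coe_toSubfield, IntermediateField.adjoin_toSubfield,
      Subfield.closure_union_range_algebraMap_rat]
    change _ = Set.range (Subtype.val : IntermediateField.adjoin F T → ℂ)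
    rw [Subtype.range_val, ← IntermediateField.coe_toSubfield,
      IntermediateField.adjoin_toSubfield,
      show Set.range (algebraMap F ℂ) = F from Subtype.range_val,
      Subfield.closure_union, Subfield.closure_union, Subfield.closure_eq]
  rw [trdegQ_eq_trdeg_closure S, trdegOver_eq_trdeg_adjoin, trdeg_add_eq ℚ F, trdegQ, hST,
    iSup_mk_algebraicIndependent_subset_range_eq_trdeg _ Subtype.val_injective]

open Submodule in
theorem rank_span_union {K V : Type*} [DivisionRing K] [AddCommGroup V] [Module K V]
    (s u : Set V) :
    Module.rank K (span K (s ∪ u)) =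
      Module.rank K (span K s) + Module.rank K (span K ((span K s).mkQ '' u)) := by
  have hle : span K s ≤ span K (s ∪ u) := span_mono Set.subset_union_left
  let f := (span K s).mkQ ∘ₗ (span K (s ∪ u)).subtype
  have hker : LinearMap.ker f = comap (span K (s ∪ u)).subtype (span K s) := by
    rw [LinearMap.ker_comp, ker_mkQ]
  have hrange : LinearMap.range f = span K ((span K s).mkQ '' u) := by
    rw [LinearMap.range_comp, range_subtype, span_union, Submodule.map_sup, mkQ_map_self,
      bot_sup_eq, map_span]
  rw [← f.rank_range_add_rank_ker, hker, (comapSubtypeEquivOfLe hle).rank_eq, hrange, add_comm]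

def SchanuelConjecture : Prop :=
  ∀ (n : ℕ) (x : Fin n → ℂ),
    Module.rank ℚ (Submodule.span ℚ (Set.range x)) ≤
      trdegQ (Set.range x ∪ Set.range fun i => Complex.exp (x i))

theorem SchanuelConjecture.of_finite (SC : SchanuelConjecture) {ι : Type*} [Finite ι]
    (x : ι → ℂ) :
    Module.rank ℚ (Submodule.span ℚ (Set.range x)) ≤
      trdegQ (Set.range x ∪ Set.range fun i => Complex.exp (x i)) := by
  obtain ⟨n, ⟨e⟩⟩ := Finite.exists_equiv_fin ι
  have hx : Set.range (x ∘ e.symm) = Set.range x := e.symm.surjective.range_comp x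
  have hexp : (Set.range fun i => Complex.exp ((x ∘ e.symm) i)) =
      Set.range fun i => Complex.exp (x i) :=
    e.symm.surjective.range_comp fun i => Complex.exp (x i)
  have h := SC n (x ∘ e.symm)
  rwa [hx, hexp] at h

theorem SchanuelConjecture.rank_span_union_le (SC : SchanuelConjecture) {ι κ : Type*}
    [Finite ι] [Finite κ] (t : ι → ℂ) (x : κ → ℂ) :
    Module.rank ℚ (Submodule.span ℚ (Set.range t ∪ Set.range x)) ≤
      trdegQ ((Set.range t ∪ Set.range fun i => Complex.exp (t i)) ∪
        (Set.range x ∪ Set.range fun i => Complex.exp (x i))) := by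
  have h := SC.of_finite (Sum.elim t x)
  have hexp : (fun i => Complex.exp (Sum.elim t x i)) =
      Sum.elim (fun i => Complex.exp (t i)) (fun i => Complex.exp (x i)) :=
    Sum.comp_elim Complex.exp t x
  rwa [hexp, Set.Sum.elim_range, Set.Sum.elim_range, Set.union_union_union_comm] at h

theorem stmt_12
    (SC : ∀ (n : ℕ) (x : Fin n → ℂ),
      Module.rank ℚ (Submodule.span ℚ (Set.range x)) ≤
        trdegQ (Set.range x ∪ Set.range fun i => Complex.exp (x i)))
    (m : ℕ) (t : Fin m → ℂ)
    (hconv : trdegQ (Set.range t ∪ Set.range fun i => Complex.exp (t i)) =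
      Module.rank ℚ (Submodule.span ℚ (Set.range t))) :
    ∀ (n : ℕ) (x : Fin n → ℂ),
      Module.rank ℚ (Submodule.span ℚ
          (Set.range fun i => (Submodule.span ℚ (Set.range t)).mkQ (x i))) ≤
        trdegOver (Subfield.closure (Set.range t ∪ Set.range fun i => Complex.exp (t i)))
          (Set.range x ∪ Set.range fun i => Complex.exp (x i)) := by
  intro n x
  have hfin : Module.rank ℚ (Submodule.span ℚ (Set.range t)) < ℵ₀ :=
    have := FiniteDimensional.span_of_finite ℚ (Set.finite_range t)
    Module.rank_lt_aleph0 ℚ _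
  refine (add_le_add_iff_of_lt_aleph0 hfin).mp ?_
  calc _ = Module.rank ℚ (Submodule.span ℚ (Set.range t ∪ Set.range x)) := by
        rw [rank_span_union, ← Set.range_comp, add_comm]; rfl
    _ ≤ _ := SchanuelConjecture.rank_span_union_le SC t x
    _ = _ := by rw [trdegQ_union, hconv, add_comm]
end
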